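/- arXiv:1301.0896 — 3 statements merged into one kernel-verified Lean document; each statement's English description precedes it below -/
import Mathlib

section
/- Let G be a group, R a commutative ring with trivial G-action, and C•(G,R) the DGA of inhomogeneous cochains. A system of 1-cochains c_{ij}: G → R for 1 ≤ i ≤ j ≤ n, (i,j) ≠ (1,n), corresponds to the map γ̄: G → Ū_{n+1}(R) with γ̄(σ)_{i,j} = (−1)^{j−i} c_{i,j−1}(σ) for i < j; then γ̄ is a group homomorphism if and only if (c_{ij}) is a defining system, i.e., for all applicable (i,l), ∂c_{il}(σ,τ) = −∑_{r=i}^{l−1} c_{ir}(σ) c_{r+1,l}(τ). -/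
/-!
For `i < j` the `(i, j)` entry of `γ̄(σ) γ̄(τ)` is a sum over `i ≤ k ≤ j`, and in every term
the signs combine to `(-1)^(k-i) (-1)^(j-k) = (-1)^(j-i)`. So multiplicativity at `(i, j)` is the
defining equation for `c_{i+1,j}` multiplied by the unit `(-1)^(j-i)`, while the entries on and
below the diagonal of a product of unitriangular matrices are automatically right.
-/

open Finset

section Dwyer

variable {R : Type*} [CommRing R]

def dwyerEntry (a : ℕ → ℕ → R) (i j : ℕ) : R :=
  if i < j then (-1) ^ (j - i) * a (i + 1) j else if i = j then 1 else 0

def dwyerMatrix (n : ℕ) (a : ℕ → ℕ → R) : Matrix (Fin (n + 1)) (Fin (n + 1)) R :=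
  fun i j => dwyerEntry a i j

section dwyerEntry

variable (a b : ℕ → ℕ → R) {i j : ℕ}

theorem dwyerEntry_of_lt (h : i < j) : dwyerEntry a i j = (-1) ^ (j - i) * a (i + 1) j :=
  if_pos h

@[simp]
theorem dwyerEntry_self (i : ℕ) : dwyerEntry a i i = 1 := by
  simp [dwyerEntry]

theorem dwyerEntry_of_gt (h : j < i) : dwyerEntry a i j = 0 := by
  simp [dwyerEntry, h.not_gt, h.ne']

theorem sum_range_dwyerEntry_mul {N : ℕ} (hj : j < N) :
    ∑ k ∈ range N, dwyerEntry a i k * dwyerEntry b k j =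
      ∑ k ∈ Icc i j, dwyerEntry a i k * dwyerEntry b k j := by
  refine (sum_subset (fun k hk => ?_) fun k _ hk => ?_).symm
  · simp only [mem_Icc, mem_range] at hk ⊢
    omega
  · rcases not_and_or.1 (mem_Icc.not.1 hk) with hik | hkj
    · rw [dwyerEntry_of_gt a (not_le.1 hik), zero_mul]
    · rw [dwyerEntry_of_gt b (not_le.1 hkj), mul_zero]

theorem sum_Icc_dwyerEntry_mul_of_lt (h : i < j) :
    ∑ k ∈ Icc i j, dwyerEntry a i k * dwyerEntry b k j =
      (-1) ^ (j - i) * (a (i + 1) j + b (i + 1) j +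
        ∑ r ∈ Ico (i + 1) j, a (i + 1) r * b (r + 1) j) := by
  have hmiddle : ∀ k ∈ Ico (i + 1) j, dwyerEntry a i k * dwyerEntry b k j =
      (-1) ^ (j - i) * (a (i + 1) k * b (k + 1) j) := fun k hk => by
    obtain ⟨hik, hkj⟩ := mem_Ico.1 hk
    rw [dwyerEntry_of_lt a hik, dwyerEntry_of_lt b hkj,
      show j - i = (k - i) + (j - k) by omega, pow_add]
    ring
  rw [Icc_eq_cons_Ioc h.le, sum_cons, Ioc_eq_cons_Ioo h, sum_cons, ← Ico_add_one_left_eq_Ioo,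
    sum_congr rfl hmiddle, ← mul_sum, dwyerEntry_self, dwyerEntry_self,
    dwyerEntry_of_lt a h, dwyerEntry_of_lt b h]
  ring

theorem sum_Icc_dwyerEntry_mul_of_le (c : ℕ → ℕ → R) (h : j ≤ i) :
    ∑ k ∈ Icc i j, dwyerEntry a i k * dwyerEntry b k j = dwyerEntry c i j := by
  rcases h.lt_or_eq with h | rfl
  · rw [Icc_eq_empty_of_lt h, sum_empty, dwyerEntry_of_gt c h]
  · simp

end dwyerEntry

section dwyerMatrix

variable {n : ℕ} (a b : ℕ → ℕ → R) {i j : Fin (n + 1)}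

theorem dwyerMatrix_mul_apply :
    (dwyerMatrix n a * dwyerMatrix n b) i j =
      ∑ k ∈ Icc (i : ℕ) j, dwyerEntry a i k * dwyerEntry b k j := by
  rw [Matrix.mul_apply, ← sum_range_dwyerEntry_mul a b j.isLt]
  exact Fin.sum_univ_eq_sum_range (fun k => dwyerEntry a i k * dwyerEntry b k j) (n + 1)

theorem dwyerMatrix_mul_apply_of_le (c : ℕ → ℕ → R) (h : j ≤ i) :
    (dwyerMatrix n a * dwyerMatrix n b) i j = dwyerMatrix n c i j := by
  rw [dwyerMatrix_mul_apply]
  exact sum_Icc_dwyerEntry_mul_of_le a b c h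

theorem dwyerMatrix_apply_eq_mul_apply_iff_of_lt (ab : ℕ → ℕ → R) (h : i < j) :
    dwyerMatrix n ab i j = (dwyerMatrix n a * dwyerMatrix n b) i j ↔
      a (i + 1) j + b (i + 1) j - ab (i + 1) j =
        -∑ r ∈ Ico ((i : ℕ) + 1) j, a (i + 1) r * b (r + 1) j := by
  rw [dwyerMatrix_mul_apply, sum_Icc_dwyerEntry_mul_of_lt a b h, dwyerMatrix,
    dwyerEntry_of_lt ab h, ((isUnit_neg_one (α := R)).pow _).mul_right_inj]
  constructor <;> intro h <;> linear_combination -h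

end dwyerMatrix

end Dwyer

theorem stmt_14_general (G : Type*) [Group G] (R : Type*) [CommRing R] (n : ℕ)
    (c : ℕ → ℕ → G → R) :
    letI γ : G → Matrix (Fin (n + 1)) (Fin (n + 1)) R := fun σ i j =>
      if (i : ℕ) < (j : ℕ) then (-1 : R) ^ ((j : ℕ) - (i : ℕ)) * c ((i : ℕ) + 1) (j : ℕ) σ
      else if i = j then 1 else 0
    (∀ σ τ : G, ∀ i j : Fin (n + 1), ¬(i = 0 ∧ j = Fin.last n) →
        γ (σ * τ) i j = (γ σ * γ τ) i j) ↔
      (∀ i j : ℕ, 1 ≤ i → i ≤ j → j ≤ n → ¬(i = 1 ∧ j = n) → ∀ σ τ : G,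
        c i j σ + c i j τ - c i j (σ * τ) =
          -∑ r ∈ Finset.Ico i j, c i r σ * c (r + 1) j τ) := by
  have hγ : (fun σ (i j : Fin (n + 1)) =>
      if (i : ℕ) < (j : ℕ) then (-1 : R) ^ ((j : ℕ) - (i : ℕ)) * c ((i : ℕ) + 1) (j : ℕ) σ
      else if i = j then 1 else 0) = fun σ => dwyerMatrix n (fun p q => c p q σ) := by
    ext σ i j
    simp only [dwyerMatrix, dwyerEntry, Fin.val_inj]
  rw [hγ]
  constructor
  · intro h i j hi hij hjn hne σ τ
    obtain ⟨i, rfl⟩ : ∃ k, i = k + 1 := ⟨i - 1, by omega⟩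
    refine (dwyerMatrix_apply_eq_mul_apply_iff_of_lt _ _ _
      (i := ⟨i, by omega⟩) (j := ⟨j, by omega⟩) (by simp only [Fin.mk_lt_mk]; omega)).1
      (h σ τ _ _ ?_)
    simp only [Fin.ext_iff, Fin.val_last, Fin.val_zero]
    omega
  · intro h σ τ i j hne
    rcases lt_or_ge i j with hij | hji
    · refine (dwyerMatrix_apply_eq_mul_apply_iff_of_lt _ _ _ hij).2
        (h (i + 1) j (by omega) hij (by omega) ?_ σ τ)
      simp only [Fin.ext_iff, Fin.val_last, Fin.val_zero] at hne
      omega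
    · exact (dwyerMatrix_mul_apply_of_le _ _ _ hji).symm

/-- Dwyer's correspondence, punctured form.
Let `G` be a group, `R` a commutative ring (trivial `G`-action).  A system of 1-cochains
`c_{ij} : G → R` for `1 ≤ i ≤ j ≤ n`, `(i,j) ≠ (1,n)` (encoded as `c : ℕ → ℕ → G → R`,
only indices in this range being relevant), corresponds to the map
`γ̄ : G → Ū_{n+1}(R)` with `γ̄(σ)_{i,j} = (−1)^{j−i} c_{i,j−1}(σ)` for `i < j`
(diagonal `1`, lower entries `0`; below indices are 0-based, so the `(1,n+1)` entry is
`(0, Fin.last n)` and the matrix formula reads `(−1)^{j−i} c_{i+1,j}(σ)`).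
Then `γ̄` is a group homomorphism into `Ū_{n+1}(R)` (i.e. multiplicative at all entries
other than the omitted one) if and only if `(c_{ij})` is a defining system, i.e.
`∂c_{il}(σ,τ) = −∑_{r=i}^{l−1} c_{ir}(σ) c_{r+1,l}(τ)` for all applicable `(i,l)`,
where `(∂c)(σ,τ) = c(σ) + c(τ) − c(στ)`. -/
theorem stmt_14 (G : Type*) [Group G] (R : Type*) [CommRing R] (n : ℕ) (hn : 2 ≤ n)
    (c : ℕ → ℕ → G → R) :
    letI γ : G → Matrix (Fin (n + 1)) (Fin (n + 1)) R := fun σ i j =>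
      if (i : ℕ) < (j : ℕ) then (-1 : R) ^ ((j : ℕ) - (i : ℕ)) * c ((i : ℕ) + 1) (j : ℕ) σ
      else if i = j then 1 else 0
    (∀ σ τ : G, ∀ i j : Fin (n + 1), ¬(i = 0 ∧ j = Fin.last n) →
        γ (σ * τ) i j = (γ σ * γ τ) i j) ↔
      (∀ i j : ℕ, 1 ≤ i → i ≤ j → j ≤ n → ¬(i = 1 ∧ j = n) → ∀ σ τ : G,
        c i j σ + c i j τ - c i j (σ * τ) =
          -∑ r ∈ Finset.Ico i j, c i r σ * c (r + 1) j τ) :=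
  stmt_14_general G R n c
end

section
/- Let C• be a DGA in which every n-tuple of 1-cocycles admits a defining system of size n. Then for every 1 ≤ k < n and 1-cocycles c₁,…,c_k ∈ C¹, there exists a defining system (c_{ij}) of size k on c₁,…,c_k such that the cohomology class [c̃_{1k}] ∈ H² vanishes. -/
/-- `c : ℕ → ℕ → C` (1-based indexing; only indices `1 ≤ i ≤ j ≤ n` are relevant) is a
defining system of size `n` for a differential `d` on a (graded) ring `C`:
`d(c_{ij}) = c̃_{ij} := −∑_{r=i}^{j−1} c_{ir} c_{r+1,j}` for all `1 ≤ i ≤ j ≤ n`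
with `(i,j) ≠ (1,n)`. -/
def IsDefiningSystem {C : Type*} [Ring C] (d : C → C) (n : ℕ) (c : ℕ → ℕ → C) : Prop :=
  ∀ i j : ℕ, 1 ≤ i → i ≤ j → j ≤ n → ¬(i = 1 ∧ j = n) →
    d (c i j) = -∑ r ∈ Finset.Ico i j, c i r * c (r + 1) j

theorem IsDefiningSystem.of_le {C : Type*} [Ring C] {d : C → C} {n k : ℕ} {c : ℕ → ℕ → C}
    (hc : IsDefiningSystem d n c) (hkn : k ≤ n) : IsDefiningSystem d k c := by
  intro i j hi hij hjk hne
  refine hc i j hi hij (hjk.trans hkn) fun h => hne ⟨h.1, ?_⟩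
  omega

theorem IsDefiningSystem.neg_sum_eq_of_lt {C : Type*} [Ring C] {d : C → C} {n k : ℕ}
    {c : ℕ → ℕ → C} (hc : IsDefiningSystem d n c) (hk : 1 ≤ k) (hkn : k < n) :
    -∑ r ∈ Finset.Ico 1 k, c 1 r * c (r + 1) k = d (c 1 k) :=
  (hc 1 k le_rfl hk hkn.le fun h => hkn.ne h.2).symm

theorem stmt_17_general (R : Type*) [CommRing R] (C : Type*) [Ring C] [Algebra R C]
    (𝒜 : ℤ → Submodule R C)
    (d : C →ₗ[R] C)
    (n : ℕ)
    (hex : ∀ f : ℕ → C, (∀ i, f i ∈ 𝒜 1 ∧ d (f i) = 0) →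
      ∃ c : ℕ → ℕ → C, (∀ i j, c i j ∈ 𝒜 1) ∧
        (∀ i, 1 ≤ i → i ≤ n → c i i = f i) ∧ IsDefiningSystem (⇑d) n c) :
    ∀ k : ℕ, 1 ≤ k → k < n →
      ∀ f : ℕ → C, (∀ i, f i ∈ 𝒜 1 ∧ d (f i) = 0) →
        ∃ c : ℕ → ℕ → C, (∀ i j, c i j ∈ 𝒜 1) ∧
          (∀ i, 1 ≤ i → i ≤ k → c i i = f i) ∧ IsDefiningSystem (⇑d) k c ∧
          ∃ b ∈ 𝒜 1, -∑ r ∈ Finset.Ico 1 k, c 1 r * c (r + 1) k = d b := by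
  intro k hk hkn f hf
  obtain ⟨c, hc𝒜, hdiag, hc⟩ := hex f hf
  exact ⟨c, hc𝒜, fun i hi hik => hdiag i hi (hik.trans hkn.le), hc.of_le hkn.le,
    c 1 k, hc𝒜 1 k, hc.neg_sum_eq_of_lt hk hkn⟩

/-- Let `C •` be a DGA (a graded `R`-algebra with degree-`+1`
differential `d`, `d ∘ d = 0`, Leibniz rule) in which every `n`-tuple of 1-cocycles
admits a defining system of size `n`.  Then for every `1 ≤ k < n` and 1-cocycles
`c₁, …, c_k ∈ C¹` there is a defining system `(c_{ij})` of size `k` on `c₁, …, c_k`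
(consisting of degree-1 elements) such that moreover the class `[c̃_{1k}] ∈ H²`
vanishes, i.e. `c̃_{1k} = −∑_{r=1}^{k−1} c_{1r} c_{r+1,k}` is a coboundary `d b`
of a degree-1 element `b`. -/
theorem stmt_17 (R : Type*) [CommRing R] (C : Type*) [Ring C] [Algebra R C]
    (𝒜 : ℤ → Submodule R C) [GradedAlgebra 𝒜]
    (d : C →ₗ[R] C)
    (hd : ∀ (i : ℤ), ∀ a ∈ 𝒜 i, d a ∈ 𝒜 (i + 1))
    (hdd : ∀ a : C, d (d a) = 0)
    (hleibniz : ∀ (i : ℤ), ∀ a ∈ 𝒜 i, ∀ b : C,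
      d (a * b) = d a * b + (((-1 : ℤˣ) ^ i : ℤˣ) : ℤ) • (a * d b))
    (n : ℕ)
    (hex : ∀ f : ℕ → C, (∀ i, f i ∈ 𝒜 1 ∧ d (f i) = 0) →
      ∃ c : ℕ → ℕ → C, (∀ i j, c i j ∈ 𝒜 1) ∧
        (∀ i, 1 ≤ i → i ≤ n → c i i = f i) ∧ IsDefiningSystem (⇑d) n c) :
    ∀ k : ℕ, 1 ≤ k → k < n →
      ∀ f : ℕ → C, (∀ i, f i ∈ 𝒜 1 ∧ d (f i) = 0) →
        ∃ c : ℕ → ℕ → C, (∀ i j, c i j ∈ 𝒜 1) ∧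
          (∀ i, 1 ≤ i → i ≤ k → c i i = f i) ∧ IsDefiningSystem (⇑d) k c ∧
          ∃ b ∈ 𝒜 1, -∑ r ∈ Finset.Ico 1 k, c 1 r * c (r + 1) k = d b :=
  stmt_17_general R C 𝒜 d n hex
end

section
/- Suppose that in a DGA C• every n-tuple of 1-cocycles admits a defining system of size n. Then for any two defining systems (c_{ij}) and (c'_{ij}) of size n with [c_{ii}] = [c'_{ii}] for i = 1,…,n, one has [c̃_{1n}] = [c̃'_{1n}] in H²; consequently the n-fold Massey product ⟨[c₁],…,[c_n]⟩ := [c̃_{1n}] is a well-defined map (H¹)ⁿ → H². -/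
open Finset

namespace Massey

section Combinatorics

variable {C : Type*} [Ring C]

def tilde (c : ℕ → ℕ → C) (i j : ℕ) : C := -∑ r ∈ Ico i j, c i r * c (r + 1) j

theorem tilde_eq_zero_of_le {c : ℕ → ℕ → C} {i j : ℕ} (h : j ≤ i) : tilde c i j = 0 := by
  rw [tilde, Ico_eq_empty_of_le h, sum_empty, neg_zero]

theorem tilde_congr {c c' : ℕ → ℕ → C} {i j : ℕ}
    (h : ∀ r ∈ Ico i j, c i r = c' i r ∧ c (r + 1) j = c' (r + 1) j) :
    tilde c i j = tilde c' i j := by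
  rw [tilde, tilde, sum_congr rfl fun r hr => by rw [(h r hr).1, (h r hr).2]]

theorem _root_.IsDefiningSystem.d_eq_tilde {d : C → C} {n : ℕ} {c : ℕ → ℕ → C}
    (h : IsDefiningSystem d n c) {i j : ℕ} (hi : 1 ≤ i) (hij : i ≤ j) (hjn : j ≤ n)
    (hne : ¬(i = 1 ∧ j = n)) : d (c i j) = tilde c i j :=
  h i j hi hij hjn hne

theorem _root_.IsDefiningSystem.mono {d : C → C} {n K : ℕ} {c : ℕ → ℕ → C}
    (h : IsDefiningSystem d n c) (hK : K < n) : IsDefiningSystem d K c :=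
  fun i j hi hij hjK _ => h i j hi hij (by omega) (by omega)

/-- The gauge transformation by `h` at position `k + 1`: it moves `c_{k+1,k+1}` by `d h`. -/
def gauge (d : C → C) (t : ℕ → ℕ → C) (k : ℕ) (h : C) (p q : ℕ) : C :=
  if p = k + 1 ∧ q = k + 1 then t p q + d h
  else if q = k + 1 then t p q + t p k * h
  else if p = k + 1 then t p q - h * t (k + 2) q
  else t p q

section Gauge

variable {d : C → C} {t : ℕ → ℕ → C} {k : ℕ} {h : C}

theorem gauge_diag : gauge d t k h (k + 1) (k + 1) = t (k + 1) (k + 1) + d h :=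
  if_pos ⟨rfl, rfl⟩

theorem gauge_col {p : ℕ} (hp : p ≠ k + 1) :
    gauge d t k h p (k + 1) = t p (k + 1) + t p k * h := by
  simp [gauge, hp]

theorem gauge_row {q : ℕ} (hq : q ≠ k + 1) :
    gauge d t k h (k + 1) q = t (k + 1) q - h * t (k + 2) q := by
  simp [gauge, hq]

theorem gauge_of_ne {p q : ℕ} (hp : p ≠ k + 1) (hq : q ≠ k + 1) : gauge d t k h p q = t p q := by
  simp [gauge, hp, hq]

theorem tilde_gauge_of_lt_or_lt {p q : ℕ} (hpq : q ≤ k ∨ k + 1 < p) :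
    tilde (gauge d t k h) p q = tilde t p q :=
  tilde_congr fun r hr => by
    rw [mem_Ico] at hr
    exact ⟨gauge_of_ne (by omega) (by omega), gauge_of_ne (by omega) (by omega)⟩

theorem tilde_gauge_of_le_of_lt {p q : ℕ} (hp : p ≤ k) (hq : k + 1 < q) :
    tilde (gauge d t k h) p q = tilde t p q := by
  have hterm : ∀ r ∈ Ico p q, gauge d t k h p r * gauge d t k h (r + 1) q =
      t p r * t (r + 1) q + ((if r = k + 1 then t p k * h * t (k + 2) q else 0) -
        if r = k then t p k * h * t (k + 2) q else 0) := by
    intro r hr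
    rw [mem_Ico] at hr
    rcases eq_or_ne r (k + 1) with rfl | h₁
    · rw [if_pos rfl, if_neg (by omega), gauge_col (by omega), gauge_of_ne (by omega) (by omega)]
      noncomm_ring
    rcases eq_or_ne r k with rfl | h₂
    · rw [if_neg h₁, if_pos rfl, gauge_of_ne (by omega) (by omega), gauge_row (by omega)]
      noncomm_ring
    · rw [if_neg h₁, if_neg h₂, gauge_of_ne (by omega) h₁, gauge_of_ne (by omega) (by omega),
        sub_zero, add_zero]
  rw [tilde, tilde, sum_congr rfl hterm, sum_add_distrib, sum_sub_distrib, sum_ite_eq',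
    sum_ite_eq', if_pos (by rw [mem_Ico]; omega), if_pos (by rw [mem_Ico]; omega), sub_self,
    add_zero]

theorem tilde_gauge_col {p : ℕ} (hp : p ≤ k) :
    tilde (gauge d t k h) p (k + 1) = tilde t p (k + 1) + tilde t p k * h - t p k * d h := by
  have hterm : ∀ r ∈ Ico p k, gauge d t k h p r * gauge d t k h (r + 1) (k + 1) =
      t p r * t (r + 1) (k + 1) + t p r * t (r + 1) k * h := by
    intro r hr
    rw [mem_Ico] at hr
    rw [gauge_of_ne (by omega) (by omega), gauge_col (by omega), mul_add, mul_assoc]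
  rw [tilde, tilde, tilde, sum_Ico_succ_top hp, sum_Ico_succ_top hp, sum_congr rfl hterm,
    sum_add_distrib, ← sum_mul, gauge_of_ne (by omega) (by omega), gauge_diag]
  noncomm_ring

theorem tilde_gauge_row {q : ℕ} (hq : k + 1 < q) :
    tilde (gauge d t k h) (k + 1) q =
      tilde t (k + 1) q - h * tilde t (k + 2) q - d h * t (k + 2) q := by
  have hterm : ∀ r ∈ Ico (k + 2) q, gauge d t k h (k + 1) r * gauge d t k h (r + 1) q =
      t (k + 1) r * t (r + 1) q - h * (t (k + 2) r * t (r + 1) q) := by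
    intro r hr
    rw [mem_Ico] at hr
    rw [gauge_row (by omega), gauge_of_ne (by omega) (by omega), sub_mul, mul_assoc]
  rw [tilde, tilde, tilde, sum_eq_sum_Ico_succ_bot hq, sum_eq_sum_Ico_succ_bot hq,
    sum_congr rfl hterm, sum_sub_distrib, ← mul_sum, gauge_diag, gauge_of_ne (by omega) (by omega)]
  noncomm_ring

end Gauge

/-- The part of `c̃_{pq}` of `t + δ` that is linear in `δ`, for `δ` supported on the entries
`(p, q)` with `p ≤ i` and `j ≤ q`. -/
def crossSum (t δ : ℕ → ℕ → C) (i j p q : ℕ) : C :=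
  ∑ r ∈ Ico j q, δ p r * t (r + 1) q + ∑ r ∈ Ico p i, t p r * δ (r + 1) q

section Correction

variable {t δ : ℕ → ℕ → C} {i j p q : ℕ}

theorem tilde_add_of_supported (hδ : ∀ p q, ¬(p ≤ i ∧ j ≤ q) → δ p q = 0) (hij : i ≤ j)
    (hp : p ≤ i) (hq : j ≤ q) : tilde (t + δ) p q = tilde t p q - crossSum t δ i j p q := by
  have hδt : ∑ r ∈ Ico p q, δ p r * t (r + 1) q = ∑ r ∈ Ico j q, δ p r * t (r + 1) q := by
    refine (sum_subset (Ico_subset_Ico (by omega) le_rfl) fun r hr hr' => ?_).symm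
    simp only [mem_Ico] at hr hr'
    rw [hδ p r (by omega), zero_mul]
  have htδ : ∑ r ∈ Ico p q, t p r * δ (r + 1) q = ∑ r ∈ Ico p i, t p r * δ (r + 1) q := by
    refine (sum_subset (Ico_subset_Ico le_rfl (by omega)) fun r hr hr' => ?_).symm
    simp only [mem_Ico] at hr hr'
    rw [hδ (r + 1) q (by omega), mul_zero]
  have hδδ : ∑ r ∈ Ico p q, δ p r * δ (r + 1) q = 0 := sum_eq_zero fun r _ => by
    rcases lt_or_ge r j with hr | hr
    · rw [hδ p r (by omega), zero_mul]
    · rw [hδ (r + 1) q (by omega), mul_zero]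
  simp only [tilde, crossSum, Pi.add_apply, add_mul, mul_add, sum_add_distrib, hδt, htδ, hδδ]
  abel

theorem tilde_add_of_not_le (hδ : ∀ p q, ¬(p ≤ i ∧ j ≤ q) → δ p q = 0) (h : ¬(p ≤ i ∧ j ≤ q)) :
    tilde (t + δ) p q = tilde t p q :=
  tilde_congr fun r hr => by
    rw [mem_Ico] at hr
    simp only [Pi.add_apply, hδ p r (by omega), hδ (r + 1) q (by omega), add_zero, and_self]

theorem crossSum_congr {δ' : ℕ → ℕ → C} (h₁ : ∀ r ∈ Ico j q, δ p r = δ' p r)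
    (h₂ : ∀ r ∈ Ico p i, δ (r + 1) q = δ' (r + 1) q) :
    crossSum t δ i j p q = crossSum t δ' i j p q := by
  rw [crossSum, crossSum, sum_congr rfl fun r hr => by rw [h₁ r hr]]
  exact congrArg _ (sum_congr rfl fun r hr => by rw [h₂ r hr])

end Correction

end Combinatorics

section Collapse

variable {C : Type*}

/-- Merges rows `p₀ + 1, …, i` and columns `j, j + 1, …` of `t` into one system, with `δ` in the
off-diagonal block: `i = a + 1 + p₀` and `j = a + 1 + j₀` both become the index `a + 1`. -/
def collapse (t δ : ℕ → ℕ → C) (p₀ j₀ a s s' : ℕ) : C :=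
  if s' ≤ a then t (s + p₀) (s' + p₀)
  else if s ≤ a + 1 then δ (s + p₀) (s' + j₀)
  else t (s + j₀) (s' + j₀)

variable {t δ : ℕ → ℕ → C} {p₀ j₀ a s s' : ℕ}

theorem collapse_of_le (hs' : s' ≤ a) : collapse t δ p₀ j₀ a s s' = t (s + p₀) (s' + p₀) :=
  if_pos hs'

theorem collapse_of_le_of_lt (hs : s ≤ a + 1) (hs' : a < s') :
    collapse t δ p₀ j₀ a s s' = δ (s + p₀) (s' + j₀) := by
  rw [collapse, if_neg (by omega), if_pos hs]

theorem collapse_of_lt (hs : a + 1 < s) (hs' : a < s') :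
    collapse t δ p₀ j₀ a s s' = t (s + j₀) (s' + j₀) := by
  rw [collapse, if_neg (by omega), if_neg (by omega)]

variable [Ring C]

theorem tilde_collapse_of_le (hs' : s' ≤ a) :
    tilde (collapse t δ p₀ j₀ a) s s' = tilde t (s + p₀) (s' + p₀) := by
  rw [tilde, tilde, ← sum_Ico_add']
  refine congrArg _ (sum_congr rfl fun r hr => ?_)
  rw [mem_Ico] at hr
  rw [collapse_of_le (by omega), collapse_of_le hs', add_right_comm]

theorem tilde_collapse_of_lt (hs : a + 1 < s) :
    tilde (collapse t δ p₀ j₀ a) s s' = tilde t (s + j₀) (s' + j₀) := by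
  rw [tilde, tilde, ← sum_Ico_add']
  refine congrArg _ (sum_congr rfl fun r hr => ?_)
  rw [mem_Ico] at hr
  rw [collapse_of_lt hs (by omega), collapse_of_lt (by omega) (by omega), add_right_comm]

theorem tilde_collapse_cross (hs : s ≤ a + 1) (hs' : a < s') :
    tilde (collapse t δ p₀ j₀ a) s s' =
      -crossSum t δ (a + 1 + p₀) (a + 1 + j₀) (s + p₀) (s' + j₀) := by
  rw [tilde, crossSum, ← sum_Ico_consecutive _ hs (show a + 1 ≤ s' by omega), add_comm,
    ← sum_Ico_add', ← sum_Ico_add']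
  congr 2
  · refine sum_congr rfl fun r hr => ?_
    rw [mem_Ico] at hr
    rw [collapse_of_le_of_lt hs (by omega), collapse_of_lt (by omega) hs', add_right_comm]
  · refine sum_congr rfl fun r hr => ?_
    rw [mem_Ico] at hr
    rw [collapse_of_le (by omega), collapse_of_le_of_lt (by omega) hs', add_right_comm]

theorem isDefiningSystem_collapse {d : C → C} {m K : ℕ} (ht : IsDefiningSystem d m t)
    (hδ : ∀ s s', 1 ≤ s → s ≤ a + 1 → a < s' → s' ≤ K → ¬(s = 1 ∧ s' = K) →
      d (δ (s + p₀) (s' + j₀)) = -crossSum t δ (a + 1 + p₀) (a + 1 + j₀) (s + p₀) (s' + j₀))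
    (hp₀ : p₀ ≤ j₀) (haK : a < K) (hKm : K + j₀ ≤ m) :
    IsDefiningSystem d K (collapse t δ p₀ j₀ a) := by
  intro s s' hs hss' hs'K hne
  show d (collapse t δ p₀ j₀ a s s') = tilde _ s s'
  by_cases h₁ : s' ≤ a
  · rw [collapse_of_le h₁, tilde_collapse_of_le h₁]
    exact ht.d_eq_tilde (by omega) (by omega) (by omega) (by omega)
  by_cases h₂ : a + 1 < s
  · rw [collapse_of_lt h₂ (by omega), tilde_collapse_of_lt h₂]
    exact ht.d_eq_tilde (by omega) (by omega) (by omega) (by omega)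
  · rw [collapse_of_le_of_lt (by omega) (by omega), tilde_collapse_cross (by omega) (by omega)]
    exact hδ s s' hs (by omega) (by omega) hs'K hne

end Collapse

section DGA

variable {R C : Type*} [CommRing R] [Ring C] [Algebra R C]
variable (𝒜 : ℤ → Submodule R C) (d : C →ₗ[R] C)

structure IsDGA : Prop where
  map_mem : ∀ (i : ℤ), ∀ a ∈ 𝒜 i, d a ∈ 𝒜 (i + 1)
  d_d : ∀ a : C, d (d a) = 0
  leibniz : ∀ (i : ℤ), ∀ a ∈ 𝒜 i, ∀ b : C,
    d (a * b) = d a * b + (((-1 : ℤˣ) ^ i : ℤˣ) : ℤ) • (a * d b)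

def Cohomologous (k : ℤ) (x y : C) : Prop := ∃ b ∈ 𝒜 k, y - x = d b

def MasseyProductsVanish (K : ℕ) : Prop :=
  ∀ u : ℕ → ℕ → C, (∀ p q, u p q ∈ 𝒜 1) → IsDefiningSystem d K u →
    Cohomologous 𝒜 d 1 0 (tilde u 1 K)

structure SameMassey (m : ℕ) (t s : ℕ → ℕ → C) : Prop where
  mem : ∀ p q, s p q ∈ 𝒜 1
  isDefiningSystem : IsDefiningSystem d m s
  cohomologous : Cohomologous 𝒜 d 1 (tilde t 1 m) (tilde s 1 m)

variable {𝒜 d}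

namespace Cohomologous

variable {k : ℤ} {x y z : C}

theorem refl (x : C) : Cohomologous 𝒜 d k x x := ⟨0, zero_mem _, by rw [sub_self, map_zero]⟩

theorem of_eq (h : x = y) : Cohomologous 𝒜 d k x y := h ▸ refl x

theorem symm : Cohomologous 𝒜 d k x y → Cohomologous 𝒜 d k y x
  | ⟨b, hb, h⟩ => ⟨-b, neg_mem hb, by rw [map_neg, ← h, neg_sub]⟩

theorem trans : Cohomologous 𝒜 d k x y → Cohomologous 𝒜 d k y z → Cohomologous 𝒜 d k x z
  | ⟨b, hb, h⟩, ⟨b', hb', h'⟩ => ⟨b + b', add_mem hb hb', by rw [map_add, ← h, ← h']; abel⟩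

end Cohomologous

namespace SameMassey

variable {m : ℕ} {t s u : ℕ → ℕ → C}

theorem refl (hmem : ∀ p q, t p q ∈ 𝒜 1) (ht : IsDefiningSystem d m t) : SameMassey 𝒜 d m t t :=
  ⟨hmem, ht, .refl _⟩

theorem trans (h₁ : SameMassey 𝒜 d m t s) (h₂ : SameMassey 𝒜 d m s u) : SameMassey 𝒜 d m t u :=
  ⟨h₂.mem, h₂.isDefiningSystem, h₁.cohomologous.trans h₂.cohomologous⟩

end SameMassey

namespace IsDGA

theorem map_mem_one (hD : IsDGA 𝒜 d) {a : C} (ha : a ∈ 𝒜 0) : d a ∈ 𝒜 1 := by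
  simpa using hD.map_mem 0 a ha

theorem d_mul_of_mem_zero (hD : IsDGA 𝒜 d) {a : C} (ha : a ∈ 𝒜 0) (b : C) :
    d (a * b) = d a * b + a * d b := by
  simpa using hD.leibniz 0 a ha b

theorem d_mul_of_mem_one (hD : IsDGA 𝒜 d) {a : C} (ha : a ∈ 𝒜 1) (b : C) :
    d (a * b) = d a * b - a * d b := by
  simpa [sub_eq_add_neg] using hD.leibniz 1 a ha b

end IsDGA

section Gauge

variable {m k : ℕ} {t : ℕ → ℕ → C} {h : C}

theorem isDefiningSystem_gauge (hD : IsDGA 𝒜 d) (ht : IsDefiningSystem d m t)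
    (hmem : ∀ p q, t p q ∈ 𝒜 1) (hh : h ∈ 𝒜 0) : IsDefiningSystem d m (gauge d t k h) := by
  intro p q hp hpq hqm hne
  show d (gauge d t k h p q) = tilde _ p q
  rcases (by omega : (q ≤ k ∨ k + 1 < p) ∨ (p = k + 1 ∧ q = k + 1) ∨ (p ≤ k ∧ q = k + 1) ∨
    (p = k + 1 ∧ k + 1 < q) ∨ (p ≤ k ∧ k + 1 < q)) with hout | ⟨rfl, rfl⟩ | ⟨hpk, rfl⟩ |
    ⟨rfl, hq⟩ | ⟨hpk, hq⟩
  · rw [gauge_of_ne (by omega) (by omega), tilde_gauge_of_lt_or_lt hout]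
    exact ht.d_eq_tilde hp hpq hqm hne
  · rw [gauge_diag, map_add, hD.d_d, add_zero, ht.d_eq_tilde hp hpq hqm hne,
      tilde_eq_zero_of_le le_rfl, tilde_eq_zero_of_le le_rfl]
  · rw [gauge_col (by omega), tilde_gauge_col hpk, map_add, hD.d_mul_of_mem_one (hmem p k),
      ht.d_eq_tilde hp hpq hqm hne, ht.d_eq_tilde hp hpk (by omega) (by omega)]
    abel
  · rw [gauge_row (by omega), tilde_gauge_row hq, map_sub, hD.d_mul_of_mem_zero hh,
      ht.d_eq_tilde hp hpq hqm hne, ht.d_eq_tilde (by omega) (by omega) hqm (by omega)]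
    abel
  · rw [gauge_of_ne (by omega) (by omega), tilde_gauge_of_le_of_lt hpk hq]
    exact ht.d_eq_tilde hp hpq hqm hne

variable [SetLike.GradedMonoid 𝒜]

theorem gauge_mem (hD : IsDGA 𝒜 d) (hmem : ∀ p q, t p q ∈ 𝒜 1) (hh : h ∈ 𝒜 0) (p q : ℕ) :
    gauge d t k h p q ∈ 𝒜 1 := by
  rw [gauge]
  split_ifs
  · exact add_mem (hmem p q) (hD.map_mem_one hh)
  · exact add_mem (hmem p q) (by simpa using SetLike.mul_mem_graded (hmem p k) hh)
  · exact sub_mem (hmem p q) (by simpa using SetLike.mul_mem_graded hh (hmem (k + 2) q))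
  · exact hmem p q

theorem sameMassey_gauge (hD : IsDGA 𝒜 d) (ht : IsDefiningSystem d m t)
    (hmem : ∀ p q, t p q ∈ 𝒜 1) (hh : h ∈ 𝒜 0) (hm : 2 ≤ m) (hk : k + 1 ≤ m) :
    SameMassey 𝒜 d m t (gauge d t k h) := by
  refine ⟨gauge_mem hD hmem hh, isDefiningSystem_gauge hD ht hmem hh, ?_⟩
  rcases (by omega : k = 0 ∨ k + 1 = m ∨ (1 ≤ k ∧ k + 1 < m)) with rfl | rfl | ⟨hk₁, hkm⟩
  · refine ⟨-(h * t 2 m), neg_mem (by simpa using SetLike.mul_mem_graded hh (hmem 2 m)), ?_⟩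
    rw [tilde_gauge_row hm, map_neg, hD.d_mul_of_mem_zero hh,
      ht.d_eq_tilde (by omega) hm le_rfl (by omega)]
    abel
  · refine ⟨t 1 k * h, by simpa using SetLike.mul_mem_graded (hmem 1 k) hh, ?_⟩
    rw [tilde_gauge_col (by omega), hD.d_mul_of_mem_one (hmem 1 k),
      ht.d_eq_tilde le_rfl (by omega) (by omega) (by omega)]
    abel
  · exact .of_eq (tilde_gauge_of_le_of_lt hk₁ hkm).symm

theorem exists_sameMassey_diag_eq (hD : IsDGA 𝒜 d) (hm : 2 ≤ m) (ht : IsDefiningSystem d m t)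
    (hmem : ∀ p q, t p q ∈ 𝒜 1) {x : ℕ → C}
    (hx : ∀ p, 1 ≤ p → p ≤ m → Cohomologous 𝒜 d 0 (t p p) (x p)) (k : ℕ) (hkm : k ≤ m) :
    ∃ s, SameMassey 𝒜 d m t s ∧ (∀ p, 1 ≤ p → p ≤ k → s p p = x p) ∧
      ∀ p, k < p → s p p = t p p := by
  induction k with
  | zero => exact ⟨t, .refl hmem ht, fun p hp hpk => by omega, fun _ _ => rfl⟩
  | succ k ih =>
    obtain ⟨s, hs, hlow, hhigh⟩ := ih (by omega)
    obtain ⟨b, hb, hbx⟩ := hx (k + 1) (by omega) hkm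
    refine ⟨gauge d s k b, hs.trans (sameMassey_gauge hD hs.isDefiningSystem hs.mem hb hm hkm),
      fun p hp hpk => ?_, fun p hp => ?_⟩
    · rcases eq_or_ne p (k + 1) with rfl | hne
      · rw [gauge_diag, hhigh (k + 1) (by omega), ← hbx, add_sub_cancel]
      · rw [gauge_of_ne hne hne, hlow p hp (by omega)]
    · rw [gauge_of_ne (by omega) (by omega), hhigh p (by omega)]

end Gauge

section Move

variable (𝒜 d) in
/-- `δ` corrects `t` after moving its entry `(i, j)` by `z`, up to the entries of level
`(i - p) + (q - j) ≤ N`. -/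
structure IsCorrection (m i j N : ℕ) (z : C) (t δ : ℕ → ℕ → C) : Prop where
  mem : ∀ p q, δ p q ∈ 𝒜 1
  eq_zero : ∀ p q, ¬(p ≤ i ∧ j ≤ q) → δ p q = 0
  apply_corner : δ i j = z
  d_eq : ∀ p q, 1 ≤ p → p ≤ i → j ≤ q → q ≤ m → i - p + (q - j) ≤ N →
    d (δ p q) = -crossSum t δ i j p q

variable {m i j N : ℕ} {z : C} {t δ : ℕ → ℕ → C}

theorem collapse_mem (ht : ∀ p q, t p q ∈ 𝒜 1) (hδ : ∀ p q, δ p q ∈ 𝒜 1) (p₀ j₀ a s s' : ℕ) :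
    collapse t δ p₀ j₀ a s s' ∈ 𝒜 1 := by
  rw [collapse]
  split_ifs
  exacts [ht _ _, hδ _ _, ht _ _]

/-- The obstruction to correcting the entry `(p, q)` is `c̃_{1K}` of the collapsed system of size
`K = (i - p) + (q - j) + 1 < m`. -/
theorem exists_d_eq_neg_crossSum {p q : ℕ} (hV : ∀ K < m, MasseyProductsVanish 𝒜 d K)
    (ht : IsDefiningSystem d m t) (htmem : ∀ p q, t p q ∈ 𝒜 1) (hδmem : ∀ p q, δ p q ∈ 𝒜 1)
    (hδ : ∀ P Q, p ≤ P → P ≤ i → j ≤ Q → Q ≤ q → ¬(P = p ∧ Q = q) →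
      d (δ P Q) = -crossSum t δ i j P Q)
    (hp : 1 ≤ p) (hpi : p ≤ i) (hij : i < j) (hjq : j ≤ q) (hqm : q ≤ m) :
    ∃ w ∈ 𝒜 1, d w = -crossSum t δ i j p q := by
  obtain ⟨p₀, rfl⟩ : ∃ p₀, p = 1 + p₀ := ⟨p - 1, by omega⟩
  obtain ⟨a, rfl⟩ : ∃ a, i = a + 1 + p₀ := ⟨i - p₀ - 1, by omega⟩
  obtain ⟨j₀, rfl⟩ : ∃ j₀, j = a + 1 + j₀ := ⟨j - a - 1, by omega⟩
  obtain ⟨K, rfl⟩ : ∃ K, q = K + j₀ := ⟨q - j₀, by omega⟩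
  have hu : IsDefiningSystem d K (collapse t δ p₀ j₀ a) :=
    isDefiningSystem_collapse ht (fun s s' _ _ _ _ _ => hδ _ _ (by omega) (by omega) (by omega)
      (by omega) (by omega)) (by omega) (by omega) hqm
  obtain ⟨w, hw, hdw⟩ := hV K (by omega) _ (collapse_mem htmem hδmem p₀ j₀ a) hu
  refine ⟨w, hw, ?_⟩
  rw [← hdw, sub_zero, tilde_collapse_cross (by omega) (by omega)]

theorem isCorrection_zero (hz : z ∈ 𝒜 1) (hdz : d z = 0) :
    IsCorrection 𝒜 d m i j 0 z t (fun p q => if p = i ∧ q = j then z else 0) where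
  mem p q := by
    split_ifs
    exacts [hz, zero_mem _]
  eq_zero p q h := if_neg (by omega)
  apply_corner := if_pos ⟨rfl, rfl⟩
  d_eq p q _ hpi hjq _ hN := by
    obtain ⟨rfl, rfl⟩ : p = i ∧ q = j := by omega
    simp [crossSum, hdz]

theorem IsCorrection.exists_succ (hV : ∀ K < m, MasseyProductsVanish 𝒜 d K)
    (ht : IsDefiningSystem d m t) (htmem : ∀ p q, t p q ∈ 𝒜 1)
    (hc : IsCorrection 𝒜 d m i j N z t δ) (hij : i < j) :
    ∃ δ', IsCorrection 𝒜 d m i j (N + 1) z t δ' := by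
  classical
  let atLevel p q := 1 ≤ p ∧ p ≤ i ∧ j ≤ q ∧ q ≤ m ∧ i - p + (q - j) = N + 1
  have hw : ∀ p q, ∃ w ∈ 𝒜 1, atLevel p q → d w = -crossSum t δ i j p q := by
    intro p q
    by_cases hpq : atLevel p q
    · obtain ⟨hp, hpi, hjq, hqm, hlevel⟩ := hpq
      obtain ⟨w, hw, hdw⟩ := exists_d_eq_neg_crossSum hV ht htmem hc.mem
        (fun P Q _ hPi hjQ _ _ => hc.d_eq P Q (by omega) hPi hjQ (by omega) (by omega))
        hp hpi hij hjq hqm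
      exact ⟨w, hw, fun _ => hdw⟩
    · exact ⟨0, zero_mem _, fun h => absurd h hpq⟩
  choose w hwmem hw using hw
  have hcross : ∀ p q, i - p + (q - j) ≤ N + 1 →
      crossSum t (fun p q => if atLevel p q then w p q else δ p q) i j p q =
        crossSum t δ i j p q :=
    fun p q hN => crossSum_congr (fun r hr => if_neg (by rw [mem_Ico] at hr; omega))
      (fun r hr => if_neg (by rw [mem_Ico] at hr; omega))
  refine ⟨fun p q => if atLevel p q then w p q else δ p q,
    ⟨fun p q => ?_, fun p q h => ?_, ?_, fun p q hp hpi hjq hqm hN => ?_⟩⟩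
  · split_ifs
    exacts [hwmem p q, hc.mem p q]
  · rw [if_neg (by omega), hc.eq_zero p q h]
  · rw [if_neg (by omega), hc.apply_corner]
  · rw [hcross p q hN]
    split_ifs with hpq
    · exact hw p q hpq
    · exact hc.d_eq p q hp hpi hjq hqm (by omega)

theorem exists_isCorrection (hV : ∀ K < m, MasseyProductsVanish 𝒜 d K)
    (ht : IsDefiningSystem d m t) (htmem : ∀ p q, t p q ∈ 𝒜 1) (hz : z ∈ 𝒜 1) (hdz : d z = 0)
    (hij : i < j) (N : ℕ) : ∃ δ, IsCorrection 𝒜 d m i j N z t δ := by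
  induction N with
  | zero => exact ⟨_, isCorrection_zero hz hdz⟩
  | succ N ih =>
    obtain ⟨δ, hc⟩ := ih
    exact hc.exists_succ hV ht htmem hij

theorem IsCorrection.isDefiningSystem_add (hc : IsCorrection 𝒜 d m i j N z t δ)
    (hN : i + m ≤ N) (ht : IsDefiningSystem d m t) (hij : i ≤ j) :
    IsDefiningSystem d m (t + δ) := by
  intro p q hp hpq hqm hne
  show d ((t + δ) p q) = tilde (t + δ) p q
  rw [Pi.add_apply, Pi.add_apply, map_add, ht.d_eq_tilde hp hpq hqm hne]
  by_cases hbox : p ≤ i ∧ j ≤ q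
  · rw [hc.d_eq p q hp hbox.1 hbox.2 hqm (by omega),
      tilde_add_of_supported hc.eq_zero hij hbox.1 hbox.2, sub_eq_add_neg]
  · rw [hc.eq_zero p q hbox, map_zero, add_zero, tilde_add_of_not_le hc.eq_zero hbox]

theorem exists_move (hV : ∀ K < m, MasseyProductsVanish 𝒜 d K) (ht : IsDefiningSystem d m t)
    (htmem : ∀ p q, t p q ∈ 𝒜 1) (hz : z ∈ 𝒜 1) (hdz : d z = 0) (hi : 1 ≤ i) (hij : i < j)
    (hjm : j ≤ m) :
    ∃ s, SameMassey 𝒜 d m t s ∧ s i j = t i j + z ∧ ∀ p q, ¬(p ≤ i ∧ j ≤ q) → s p q = t p q := by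
  obtain ⟨δ, hc⟩ := exists_isCorrection hV ht htmem hz hdz hij (i + m)
  refine ⟨t + δ, ⟨fun p q => add_mem (htmem p q) (hc.mem p q),
    hc.isDefiningSystem_add le_rfl ht hij.le, δ 1 m, hc.mem 1 m, ?_⟩,
    by rw [Pi.add_apply, Pi.add_apply, hc.apply_corner],
    fun p q h => by rw [Pi.add_apply, Pi.add_apply, hc.eq_zero p q h, add_zero]⟩
  rw [tilde_add_of_supported hc.eq_zero hij.le hi hjm, hc.d_eq 1 m le_rfl hi hjm le_rfl (by omega)]
  abel

end Move

section Agree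

def AgreeOnShorter (m L : ℕ) (t t' : ℕ → ℕ → C) : Prop :=
  ∀ p q, 1 ≤ p → p ≤ q → q ≤ m → q - p < L → ¬(p = 1 ∧ q = m) → t p q = t' p q

variable {m L : ℕ} {t t' : ℕ → ℕ → C}

theorem AgreeOnShorter.tilde_eq {i j : ℕ} (h : AgreeOnShorter m L t t')
    (hi : 1 ≤ i) (hjm : j ≤ m) (hL : j - i ≤ L) : tilde t i j = tilde t' i j :=
  tilde_congr fun r hr => by
    rw [mem_Ico] at hr
    exact ⟨h i r hi hr.1 (by omega) (by omega) (by omega),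
      h (r + 1) j (by omega) (by omega) hjm (by omega) (by omega)⟩

theorem exists_eq_of_tilde_eq {i j : ℕ} (hV : ∀ K < m, MasseyProductsVanish 𝒜 d K)
    (ht : IsDefiningSystem d m t) (htmem : ∀ p q, t p q ∈ 𝒜 1) (ht' : IsDefiningSystem d m t')
    (ht'mem : ∀ p q, t' p q ∈ 𝒜 1) (hi : 1 ≤ i) (hij : i < j) (hjm : j ≤ m)
    (hne : ¬(i = 1 ∧ j = m)) (htilde : tilde t i j = tilde t' i j) :
    ∃ s, SameMassey 𝒜 d m t s ∧ s i j = t' i j ∧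
      ∀ p q, q - p ≤ j - i → ¬(p = i ∧ q = j) → s p q = t p q := by
  have hdz : d (t' i j - t i j) = 0 := by
    rw [map_sub, ht.d_eq_tilde hi hij.le hjm hne, ht'.d_eq_tilde hi hij.le hjm hne, htilde,
      sub_self]
  obtain ⟨s, hs, hsij, hsoff⟩ :=
    exists_move hV ht htmem (sub_mem (ht'mem i j) (htmem i j)) hdz hi hij hjm
  exact ⟨s, hs, by rw [hsij, add_sub_cancel], fun p q hpq hne' => hsoff p q (by omega)⟩

theorem AgreeOnShorter.exists_sameMassey_agree_length (hV : ∀ K < m, MasseyProductsVanish 𝒜 d K)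
    (ht : IsDefiningSystem d m t) (htmem : ∀ p q, t p q ∈ 𝒜 1) (ht' : IsDefiningSystem d m t')
    (ht'mem : ∀ p q, t' p q ∈ 𝒜 1) (hL : 1 ≤ L) (h : AgreeOnShorter m L t t') (k : ℕ) :
    ∃ s, SameMassey 𝒜 d m t s ∧ AgreeOnShorter m L s t' ∧
      ∀ p, 1 ≤ p → p ≤ k → p + L ≤ m → ¬(p = 1 ∧ p + L = m) → s p (p + L) = t' p (p + L) := by
  induction k with
  | zero => exact ⟨t, .refl htmem ht, h, fun p hp hpk => by omega⟩
  | succ k ih =>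
    obtain ⟨s, hs, hagree, hdone⟩ := ih
    by_cases hk : k + 1 + L ≤ m ∧ ¬(k + 1 = 1 ∧ k + 1 + L = m)
    · obtain ⟨s', hs', hs'k, hs'off⟩ := exists_eq_of_tilde_eq hV hs.isDefiningSystem hs.mem ht'
        ht'mem le_add_self (by omega) hk.1 hk.2 (hagree.tilde_eq le_add_self hk.1 (by omega))
      refine ⟨s', hs.trans hs', fun p q h₁ h₂ h₃ h₄ h₅ => ?_, fun p h₁ h₂ h₃ h₄ => ?_⟩
      · rw [hs'off p q (by omega) (by omega), hagree p q h₁ h₂ h₃ h₄ h₅]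
      · rcases eq_or_ne p (k + 1) with rfl | hp
        · exact hs'k
        · rw [hs'off p (p + L) (by omega) (by omega), hdone p h₁ (by omega) h₃ h₄]
    · exact ⟨s, hs, hagree, fun p h₁ h₂ h₃ h₄ => hdone p h₁ (by omega) h₃ h₄⟩

theorem AgreeOnShorter.exists_sameMassey_succ (hV : ∀ K < m, MasseyProductsVanish 𝒜 d K)
    (ht : IsDefiningSystem d m t) (htmem : ∀ p q, t p q ∈ 𝒜 1) (ht' : IsDefiningSystem d m t')
    (ht'mem : ∀ p q, t' p q ∈ 𝒜 1) (hL : 1 ≤ L) (h : AgreeOnShorter m L t t') :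
    ∃ s, SameMassey 𝒜 d m t s ∧ AgreeOnShorter m (L + 1) s t' := by
  obtain ⟨s, hs, hagree, hlen⟩ :=
    h.exists_sameMassey_agree_length hV ht htmem ht' ht'mem hL m
  refine ⟨s, hs, fun p q h₁ h₂ h₃ h₄ h₅ => ?_⟩
  rcases Nat.lt_or_ge (q - p) L with hlt | hge
  · exact hagree p q h₁ h₂ h₃ hlt h₅
  · obtain rfl : q = p + L := by omega
    exact hlen p h₁ (by omega) h₃ h₅

theorem exists_sameMassey_agreeOnShorter (hV : ∀ K < m, MasseyProductsVanish 𝒜 d K)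
    (ht : IsDefiningSystem d m t) (htmem : ∀ p q, t p q ∈ 𝒜 1) (ht' : IsDefiningSystem d m t')
    (ht'mem : ∀ p q, t' p q ∈ 𝒜 1) (hdiag : ∀ p, 1 ≤ p → p ≤ m → t p p = t' p p)
    (L : ℕ) (hL : 1 ≤ L) : ∃ s, SameMassey 𝒜 d m t s ∧ AgreeOnShorter m L s t' := by
  induction L, hL using Nat.le_induction with
  | base => exact ⟨t, .refl htmem ht, fun p q h₁ _ h₃ _ _ => by
      obtain rfl : p = q := by omega
      exact hdiag p h₁ h₃⟩
  | succ L hL ih =>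
    obtain ⟨s, hs, hagree⟩ := ih
    obtain ⟨s', hs', hagree'⟩ :=
      hagree.exists_sameMassey_succ hV hs.isDefiningSystem hs.mem ht' ht'mem hL
    exact ⟨s', hs.trans hs', hagree'⟩

end Agree

theorem cohomologous_tilde_of_vanish [SetLike.GradedMonoid 𝒜] {m : ℕ} {t t' : ℕ → ℕ → C}
    (hD : IsDGA 𝒜 d) (hV : ∀ K < m, MasseyProductsVanish 𝒜 d K)
    (ht : IsDefiningSystem d m t) (htmem : ∀ p q, t p q ∈ 𝒜 1) (ht' : IsDefiningSystem d m t')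
    (ht'mem : ∀ p q, t' p q ∈ 𝒜 1)
    (hdiag : ∀ p, 1 ≤ p → p ≤ m → Cohomologous 𝒜 d 0 (t p p) (t' p p)) :
    Cohomologous 𝒜 d 1 (tilde t 1 m) (tilde t' 1 m) := by
  rcases Nat.lt_or_ge m 2 with hm | hm
  · exact .of_eq (by rw [tilde_eq_zero_of_le (by omega), tilde_eq_zero_of_le (by omega)])
  obtain ⟨s, hs, hsdiag, -⟩ := exists_sameMassey_diag_eq hD hm ht htmem hdiag m le_rfl
  obtain ⟨s', hs', hagree⟩ := exists_sameMassey_agreeOnShorter hV hs.isDefiningSystem hs.mem ht'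
    ht'mem hsdiag (m - 1) (by omega)
  exact (hs.trans hs').cohomologous.trans (.of_eq (hagree.tilde_eq le_rfl le_rfl le_rfl))

theorem masseyProductsVanish_of_lt [SetLike.GradedMonoid 𝒜] {n : ℕ} (hD : IsDGA 𝒜 d)
    (hex : ∀ f : ℕ → C, (∀ i, f i ∈ 𝒜 1 ∧ d (f i) = 0) →
      ∃ c : ℕ → ℕ → C, (∀ i j, c i j ∈ 𝒜 1) ∧
        (∀ i, 1 ≤ i → i ≤ n → c i i = f i) ∧ IsDefiningSystem d n c) :
    ∀ K < n, MasseyProductsVanish 𝒜 d K := by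
  intro K
  induction K using Nat.strong_induction_on with
  | _ K ih =>
  intro hKn u humem hu
  rcases Nat.lt_or_ge K 2 with hK | hK
  · rw [tilde_eq_zero_of_le (by omega)]
    exact .refl 0
  classical
  obtain ⟨c, hcmem, hcdiag, hc⟩ := hex (fun k => if 1 ≤ k ∧ k ≤ K then u k k else 0) fun k => by
    split_ifs with hk
    · exact ⟨humem k k, by rw [hu.d_eq_tilde hk.1 le_rfl hk.2 (by omega),
        tilde_eq_zero_of_le le_rfl]⟩
    · exact ⟨zero_mem _, map_zero d⟩
  have hcoh := cohomologous_tilde_of_vanish hD (fun K' hK' => ih K' hK' (by omega)) hu humem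
    (hc.mono hKn) hcmem fun i h₁ h₂ => .of_eq (by rw [hcdiag i h₁ (by omega), if_pos ⟨h₁, h₂⟩])
  refine Cohomologous.trans ⟨c 1 K, hcmem 1 K, ?_⟩ hcoh.symm
  rw [sub_zero, hc.d_eq_tilde le_rfl (by omega) hKn.le (by omega)]

end DGA

end Massey

theorem stmt_18_general (R : Type*) [CommRing R] (C : Type*) [Ring C] [Algebra R C]
    (𝒜 : ℤ → Submodule R C) [GradedAlgebra 𝒜]
    (d : C →ₗ[R] C)
    (hd : ∀ (i : ℤ), ∀ a ∈ 𝒜 i, d a ∈ 𝒜 (i + 1))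
    (hdd : ∀ a : C, d (d a) = 0)
    (hleibniz : ∀ (i : ℤ), ∀ a ∈ 𝒜 i, ∀ b : C,
      d (a * b) = d a * b + (((-1 : ℤˣ) ^ i : ℤˣ) : ℤ) • (a * d b))
    (n : ℕ)
    (hex : ∀ f : ℕ → C, (∀ i, f i ∈ 𝒜 1 ∧ d (f i) = 0) →
      ∃ c : ℕ → ℕ → C, (∀ i j, c i j ∈ 𝒜 1) ∧
        (∀ i, 1 ≤ i → i ≤ n → c i i = f i) ∧ IsDefiningSystem (⇑d) n c)
    (c c' : ℕ → ℕ → C)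
    (hmem : ∀ i j, c i j ∈ 𝒜 1) (hmem' : ∀ i j, c' i j ∈ 𝒜 1)
    (hsys : IsDefiningSystem (⇑d) n c) (hsys' : IsDefiningSystem (⇑d) n c')
    (hdiag : ∀ i, 1 ≤ i → i ≤ n → ∃ b ∈ 𝒜 0, c' i i - c i i = d b) :
    ∃ b ∈ 𝒜 1,
      (-∑ r ∈ Finset.Ico 1 n, c' 1 r * c' (r + 1) n) -
        (-∑ r ∈ Finset.Ico 1 n, c 1 r * c (r + 1) n) = d b := by
  have hD : Massey.IsDGA 𝒜 d := ⟨hd, hdd, hleibniz⟩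
  exact Massey.cohomologous_tilde_of_vanish hD (Massey.masseyProductsVanish_of_lt hD hex)
    hsys hmem hsys' hmem' hdiag

/-- uniqueness of Massey products.
Suppose that in a DGA `C •` (a graded `R`-algebra with degree-`+1` differential `d`,
`d ∘ d = 0`, Leibniz rule) every `n`-tuple of 1-cocycles admits a defining system of
size `n`.  Then for any two defining systems `(c_{ij})`, `(c'_{ij})` of size `n`
(consisting of degree-1 elements) with cohomologous diagonals `[c_{ii}] = [c'_{ii}]`
(`i = 1, …, n`), one has `[c̃_{1n}] = [c̃'_{1n}]` in `H²`: the difference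
`c̃'_{1n} − c̃_{1n}` is the coboundary of a degree-1 element.  Consequently the
`n`-fold Massey product `⟨[c₁],…,[c_n]⟩ := [c̃_{1n}]` is a well-defined map
`(H¹)ⁿ → H²`. -/
theorem stmt_18 (R : Type*) [CommRing R] (C : Type*) [Ring C] [Algebra R C]
    (𝒜 : ℤ → Submodule R C) [GradedAlgebra 𝒜]
    (d : C →ₗ[R] C)
    (hd : ∀ (i : ℤ), ∀ a ∈ 𝒜 i, d a ∈ 𝒜 (i + 1))
    (hdd : ∀ a : C, d (d a) = 0)
    (hleibniz : ∀ (i : ℤ), ∀ a ∈ 𝒜 i, ∀ b : C,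
      d (a * b) = d a * b + (((-1 : ℤˣ) ^ i : ℤˣ) : ℤ) • (a * d b))
    (n : ℕ) (hn : 2 ≤ n)
    (hex : ∀ f : ℕ → C, (∀ i, f i ∈ 𝒜 1 ∧ d (f i) = 0) →
      ∃ c : ℕ → ℕ → C, (∀ i j, c i j ∈ 𝒜 1) ∧
        (∀ i, 1 ≤ i → i ≤ n → c i i = f i) ∧ IsDefiningSystem (⇑d) n c)
    (c c' : ℕ → ℕ → C)
    (hmem : ∀ i j, c i j ∈ 𝒜 1) (hmem' : ∀ i j, c' i j ∈ 𝒜 1)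
    (hsys : IsDefiningSystem (⇑d) n c) (hsys' : IsDefiningSystem (⇑d) n c')
    (hdiag : ∀ i, 1 ≤ i → i ≤ n → ∃ b ∈ 𝒜 0, c' i i - c i i = d b) :
    ∃ b ∈ 𝒜 1,
      (-∑ r ∈ Finset.Ico 1 n, c' 1 r * c' (r + 1) n) -
        (-∑ r ∈ Finset.Ico 1 n, c 1 r * c (r + 1) n) = d b :=
  stmt_18_general R C 𝒜 d hd hdd hleibniz n hex c c' hmem hmem' hsys hsys' hdiag
end
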